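/- For every n ≥ 1, every d ≥ 1, and every degree-d polynomial threshold function f : {-1,1}^n → {-1,1}, the average sensitivity satisfies AS(f) ≤ 3 · n^{1 - 2^{-d}}. -/

import Mathlib

open Finset MeasureTheory ProbabilityTheory
open scoped Classical

noncomputable section

/-- The ±1 real value of a Boolean bit (`true ↦ 1`, `false ↦ -1`). -/
def pmOne (b : Bool) : ℝ := if b then 1 else -1

/-- Noise sensitivity at rate `δ` of a Boolean function on the hypercube `{-1,1}^n`:
`Pr[f(X) ≠ f(Z)]` where `X` is uniform and `Z` flips each coordinate of `X`
independently with probability `δ`. -/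
def noiseSens {n : ℕ} (δ : ℝ) (f : (Fin n → Bool) → Bool) : ℝ :=
  (1 / 2 ^ n : ℝ) * ∑ x : Fin n → Bool, ∑ s : Fin n → Bool,
    (∏ i, if s i then δ else 1 - δ) * (if f x ≠ f (fun i => xor (s i) (x i)) then 1 else 0)

/-- Influence of the `i`-th variable: `Pr[f(X) ≠ f(X^{(i)})]`. -/
def influence {n : ℕ} (f : (Fin n → Bool) → Bool) (i : Fin n) : ℝ :=
  (1 / 2 ^ n : ℝ) * ∑ x : Fin n → Bool,
    if f x ≠ f (Function.update x i (!x i)) then 1 else 0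

/-- Average sensitivity (total influence). -/
def avgSens {n : ℕ} (f : (Fin n → Bool) → Bool) : ℝ := ∑ i, influence f i

/-- `f` is a degree-`d` polynomial threshold function: `f = sign(P)` for some real
polynomial of total degree at most `d`, with the convention `sign 0 = 1`. -/
def IsPTF {n : ℕ} (d : ℕ) (f : (Fin n → Bool) → Bool) : Prop :=
  ∃ P : MvPolynomial (Fin n) ℝ, P.totalDegree ≤ d ∧
    ∀ x, (f x = true ↔ 0 ≤ MvPolynomial.eval (fun i => pmOne (x i)) P)

/-- Evaluation of the multilinear polynomial with coefficients `a` at the point `x`. -/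
def mlEval {n : ℕ} (a : Finset (Fin n) → ℝ) (x : Fin n → ℝ) : ℝ :=
  ∑ I : Finset (Fin n), a I * ∏ i ∈ I, x i

/-- The multilinear polynomial with coefficients `a` has degree at most `d`. -/
def DegLE {n : ℕ} (a : Finset (Fin n) → ℝ) (d : ℕ) : Prop :=
  ∀ I, a I ≠ 0 → I.card ≤ d

/-- Squared weight `w_i²` of coordinate `i`: `Σ_{I ∋ i} a_I²`. -/
def wsq {n : ℕ} (a : Finset (Fin n) → ℝ) (i : Fin n) : ℝ :=
  ∑ I ∈ univ.filter (fun I : Finset (Fin n) => i ∈ I), a I ^ 2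

/-- `ε`-regularity: `Σ_i w_i⁴ ≤ ε² (Σ_i w_i²)²`. -/
def Regular {n : ℕ} (a : Finset (Fin n) → ℝ) (ε : ℝ) : Prop :=
  ∑ i, wsq a i ^ 2 ≤ ε ^ 2 * (∑ i, wsq a i) ^ 2

/-- `σ_{k+1}²(P) = Σ_{j ≥ k (0-based)} w_j²` (tail weight, `k` restricted variables). -/
def sigmaSq {n : ℕ} (a : Finset (Fin n) → ℝ) (k : ℕ) : ℝ :=
  ∑ j ∈ univ.filter (fun j : Fin n => k ≤ (j : ℕ)), wsq a j

/-- The variables are ordered by decreasing weight. -/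
def OrderedWeights {n : ℕ} (a : Finset (Fin n) → ℝ) : Prop :=
  ∀ i j : Fin n, i ≤ j → wsq a j ≤ wsq a i

/-- The `ε`-critical index `K(P,ε)`: least `k` such that `w_j² ≤ ε² σ_{k+1}²` for all
`j` beyond the first `k` variables. -/
def critIndex {n : ℕ} (a : Finset (Fin n) → ℝ) (ε : ℝ) : ℕ :=
  sInf {k : ℕ | ∀ j : Fin n, k ≤ (j : ℕ) → wsq a j ≤ ε ^ 2 * sigmaSq a k}

/-- Coefficients (in the variables `Y_j`, `j ≥ K`) of the restriction of the multilinear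
polynomial `a` obtained by fixing the first `K` variables to `x`. -/
def restCoeff {n : ℕ} (a : Finset (Fin n) → ℝ) (K : ℕ) (x : Fin n → ℝ)
    (J : Finset (Fin n)) : ℝ :=
  if ∀ j ∈ J, K ≤ (j : ℕ) then
    ∑ I ∈ univ.filter (fun I : Finset (Fin n) => I.filter (fun i => K ≤ i.val) = J),
      a I * ∏ i ∈ I.filter (fun i => i.val < K), x i
  else 0

/-- Standard Gaussian measure on `ℝ^n`. -/
def gaussn (n : ℕ) : Measure (Fin n → ℝ) := Measure.pi fun _ => gaussianReal 0 1

/-- Gaussian noise sensitivity: `Pr[f(X) ≠ f((1-δ)X + √(2δ-δ²)Y)]` for independent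
standard Gaussian vectors `X, Y`. -/
def gns (n : ℕ) (δ : ℝ) (f : (Fin n → ℝ) → ℝ) : ℝ :=
  (((gaussn n).prod (gaussn n))
    {p | f p.1 ≠ f (fun i => (1 - δ) * p.1 i + Real.sqrt (2 * δ - δ ^ 2) * p.2 i)}).toReal

/-- Normalized probabilists' Hermite polynomial `H_k(x)`. -/
def normHermite (k : ℕ) (x : ℝ) : ℝ :=
  Polynomial.aeval x (Polynomial.hermite k) / Real.sqrt (Nat.factorial k)

/-!
Write `f = sgn P`. The sign `g i` of the discrete derivative `∂ᵢP` is a PTF of degree `d - 1`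
that does not depend on `xᵢ` and equals `f(x)·xᵢ` wherever `f` is sensitive to coordinate `i`.
Hence `2ⁿ·AS(f) = ∑ₓ f(x) ∑ᵢ xᵢ gᵢ(x)`, and Cauchy–Schwarz gives
`AS(f)² ≤ 𝔼[(∑ᵢ xᵢ gᵢ)²] ≤ n + ∑ⱼ AS(gⱼ)`, since a cross term `𝔼[xᵢ gᵢ xⱼ gⱼ]` is at most the
influence of `i` on `gⱼ`. Induction on `d` then yields `AS(f) ≤ 2 n^{1 - 2^{-d}}`.
-/

section BooleanCube

variable {n : ℕ}

@[simp] lemma pmOne_true : pmOne true = 1 := rfl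

@[simp] lemma pmOne_false : pmOne false = -1 := rfl

lemma pmOne_mul_self (b : Bool) : pmOne b * pmOne b = 1 := by cases b <;> simp [pmOne]

lemma pmOne_not (b : Bool) : pmOne (!b) = -pmOne b := by cases b <;> simp [pmOne]

lemma abs_pmOne (b : Bool) : |pmOne b| = 1 := by cases b <;> simp [pmOne]

lemma pmOne_sub_pmOne_div_two (a b : Bool) :
    (pmOne a - pmOne b) / 2 = if a = b then 0 else pmOne a := by
  cases a <;> cases b <;> norm_num [pmOne]

def flipCoord (i : Fin n) (x : Fin n → Bool) : Fin n → Bool := Function.update x i (!x i)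

lemma flipCoord_involutive (i : Fin n) : Function.Involutive (flipCoord i) := by
  intro x
  simp [flipCoord]

lemma sum_comp_flipCoord (i : Fin n) (h : (Fin n → Bool) → ℝ) :
    ∑ x, h (flipCoord i x) = ∑ x, h x :=
  (flipCoord_involutive i).bijective.sum_comp h

lemma sum_mul_eq_sum_mul_half_sub {i : Fin n} {u : (Fin n → Bool) → ℝ}
    (hu : ∀ x, u (flipCoord i x) = -u x) (v : (Fin n → Bool) → ℝ) :
    ∑ x, u x * v x = ∑ x, u x * ((v x - v (flipCoord i x)) / 2) := by
  have h := sum_comp_flipCoord i fun x => u x * v x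
  simp only [hu, neg_mul, sum_neg_distrib] at h
  simp only [mul_div_assoc', mul_sub, ← sum_div, sum_sub_distrib]
  linarith

lemma influence_nonneg (f : (Fin n → Bool) → Bool) (i : Fin n) : 0 ≤ influence f i := by
  unfold influence
  positivity

lemma sum_cube_one : ∑ _x : Fin n → Bool, (1 : ℝ) = 2 ^ n := by simp

lemma avgSens_const (b : Bool) : avgSens (fun _ : Fin n → Bool => b) = 0 := by
  simp [avgSens, influence]

lemma two_pow_mul_influence (f : (Fin n → Bool) → Bool) (i : Fin n) :
    2 ^ n * influence f i = ∑ x, if f x ≠ f (flipCoord i x) then 1 else 0 := by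
  rw [influence, ← mul_assoc, mul_one_div_cancel (by positivity), one_mul]
  rfl

lemma pmOne_flipCoord_self (i : Fin n) (x : Fin n → Bool) :
    pmOne (flipCoord i x i) = -pmOne (x i) := by
  simp [flipCoord, pmOne_not]

lemma flipCoord_of_ne {i j : Fin n} (h : j ≠ i) (x : Fin n → Bool) : flipCoord i x j = x j :=
  Function.update_of_ne h _ _

lemma sum_pmOne_mul_eq_influence {f g : (Fin n → Bool) → Bool} {i : Fin n}
    (hg : ∀ x, g (flipCoord i x) = g x)
    (hfg : ∀ x, f x ≠ f (flipCoord i x) → pmOne (g x) = pmOne (f x) * pmOne (x i)) :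
    ∑ x, pmOne (x i) * pmOne (g x) * pmOne (f x) = 2 ^ n * influence f i := by
  rw [two_pow_mul_influence, sum_mul_eq_sum_mul_half_sub (fun x => by
    rw [pmOne_flipCoord_self, hg, neg_mul])]
  refine sum_congr rfl fun x _ => ?_
  rw [pmOne_sub_pmOne_div_two]
  by_cases hx : f x = f (flipCoord i x)
  · simp [hx]
  · rw [if_neg hx, if_pos hx, hfg x hx]
    linear_combination (pmOne (f x) * pmOne (f x)) * pmOne_mul_self (x i)
      + pmOne_mul_self (f x)

lemma sum_pmOne_mul_le_influence {g h : (Fin n → Bool) → Bool} {i j : Fin n} (hij : j ≠ i)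
    (hg : ∀ x, g (flipCoord i x) = g x) :
    ∑ x, pmOne (x i) * pmOne (g x) * pmOne (x j) * pmOne (h x) ≤ 2 ^ n * influence h i := by
  rw [two_pow_mul_influence, sum_mul_eq_sum_mul_half_sub (fun x => by
    rw [pmOne_flipCoord_self, hg, flipCoord_of_ne hij, neg_mul, neg_mul])]
  refine sum_le_sum fun x _ => ?_
  rw [pmOne_sub_pmOne_div_two]
  by_cases hx : h x = h (flipCoord i x)
  · simp [hx]
  · rw [if_neg hx, if_pos hx]
    exact (le_abs_self _).trans (by simp [abs_mul, abs_pmOne])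

theorem avgSens_sq_le {f : (Fin n → Bool) → Bool} {g : Fin n → (Fin n → Bool) → Bool}
    (hg : ∀ i x, g i (flipCoord i x) = g i x)
    (hfg : ∀ i x, f x ≠ f (flipCoord i x) → pmOne (g i x) = pmOne (f x) * pmOne (x i)) :
    avgSens f ^ 2 ≤ n + ∑ j, avgSens (g j) := by
  set u : Fin n → (Fin n → Bool) → ℝ := fun i x => pmOne (x i) * pmOne (g i x)
  have hcorr : 2 ^ n * avgSens f = ∑ x, (∑ i, u i x) * pmOne (f x) := by
    simp only [avgSens, mul_sum, sum_mul]
    rw [sum_comm]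
    exact sum_congr rfl fun i _ => (sum_pmOne_mul_eq_influence (hg i) (hfg i)).symm
  have hcross : ∀ i j, ∑ x, u i x * u j x
      ≤ 2 ^ n * ((if i = j then 1 else 0) + influence (g j) i) := by
    intro i j
    by_cases hij : i = j
    · subst hij
      have hsq : ∀ x, u i x * u i x = 1 := fun x => by
        linear_combination (pmOne (x i) * pmOne (x i)) * pmOne_mul_self (g i x)
          + pmOne_mul_self (x i)
      simp only [hsq, sum_cube_one, ↓reduceIte]
      exact le_mul_of_one_le_right (by positivity) (by linarith [influence_nonneg (g i) i])
    · simp only [u, if_neg hij, zero_add, ← mul_assoc]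
      exact sum_pmOne_mul_le_influence (Ne.symm hij) (hg i)
  have hmoment : ∑ x, (∑ i, u i x) ^ 2 ≤ 2 ^ n * (n + ∑ j, avgSens (g j)) :=
    calc ∑ x, (∑ i, u i x) ^ 2 = ∑ i, ∑ j, ∑ x, u i x * u j x := by
          simp only [sq, sum_mul_sum]
          rw [sum_comm]
          exact sum_congr rfl fun i _ => sum_comm
      _ ≤ ∑ i, ∑ j, 2 ^ n * ((if i = j then 1 else 0) + influence (g j) i) :=
          sum_le_sum fun i _ => sum_le_sum fun j _ => hcross i j
      _ = 2 ^ n * (n + ∑ j, avgSens (g j)) := by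
          simp only [← mul_sum, mul_add, sum_add_distrib, sum_ite_eq, mem_univ, if_true,
            sum_const, card_univ, Fintype.card_fin, nsmul_eq_mul, mul_one, avgSens]
          rw [sum_comm]
          ring
  have hcs := sum_mul_sq_le_sq_mul_sq univ (fun x => ∑ i, u i x) fun x => pmOne (f x)
  simp only [sq (pmOne _), pmOne_mul_self, sum_cube_one, ← hcorr] at hcs
  have key : (2 ^ n * 2 ^ n) * avgSens f ^ 2 ≤ (2 ^ n * 2 ^ n) * (n + ∑ j, avgSens (g j)) :=
    calc (2 ^ n * 2 ^ n) * avgSens f ^ 2 = (2 ^ n * avgSens f) ^ 2 := by ring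
      _ ≤ (∑ x, (∑ i, u i x) ^ 2) * 2 ^ n := hcs
      _ ≤ 2 ^ n * (n + ∑ j, avgSens (g j)) * 2 ^ n := by gcongr
      _ = (2 ^ n * 2 ^ n) * (n + ∑ j, avgSens (g j)) := by ring
  exact le_of_mul_le_mul_left key (by positivity)

end BooleanCube

open MvPolynomial

section Derivative

variable {σ : Type*}

/-- The discrete derivative in direction `i` on `{-1,1}^σ`: the monomials odd in `X i`, with
`X i` removed, since `x_i ^ k` equals `x_i` or `1` there. -/
def cubeDeriv (P : MvPolynomial σ ℝ) (i : σ) : MvPolynomial σ ℝ :=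
  ∑ α ∈ P.support.filter (fun α => Odd (α i)), monomial (α.erase i) (P.coeff α)

lemma totalDegree_cubeDeriv_le (P : MvPolynomial σ ℝ) (i : σ) :
    (cubeDeriv P i).totalDegree ≤ P.totalDegree - 1 := by
  refine (totalDegree_finsetSum _ _).trans (Finset.sup_le fun α hα => ?_)
  obtain ⟨hα, hodd⟩ := mem_filter.1 hα
  have hsplit : (α.sum fun _ e => e) = (α.erase i).sum (fun _ e => e) + α i := by
    conv_lhs => rw [← Finsupp.erase_add_single i α]
    rw [Finsupp.sum_add_index' (fun _ => rfl) (fun _ _ _ => rfl), Finsupp.sum_single_index rfl]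
  have := le_totalDegree hα
  have := totalDegree_monomial_le (α.erase i) (P.coeff α)
  have := hodd.pos
  simp only [Function.id_def] at *
  omega

lemma prod_update_pow [DecidableEq σ] (α : σ →₀ ℕ) (y : σ → ℝ) (i : σ) (c : ℝ) :
    (α.prod fun j e => Function.update y i c j ^ e)
      = c ^ α i * (α.erase i).prod fun j e => y j ^ e := by
  conv_lhs => rw [← Finsupp.erase_add_single i α]
  rw [Finsupp.prod_add_index' (fun _ => pow_zero _) (fun _ _ _ => pow_add _ _ _), mul_comm]
  simp only [Finsupp.prod_single_index, pow_zero, Function.update_self]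
  congr 1
  refine Finsupp.prod_congr fun j hj => ?_
  rw [Function.update_of_ne (by rintro rfl; simp at hj)]

lemma eval_update_sub_eval_update [DecidableEq σ] (P : MvPolynomial σ ℝ) (i : σ) (y : σ → ℝ) :
    eval (Function.update y i 1) P - eval (Function.update y i (-1)) P
      = 2 * eval y (cubeDeriv P i) := by
  conv_lhs => rw [P.as_sum]
  simp only [cubeDeriv, map_sum, eval_monomial, prod_update_pow, ← sum_sub_distrib, mul_sum,
    sum_filter]
  refine sum_congr rfl fun α _ => ?_
  split_ifs with h
  · rw [h.neg_one_pow, one_pow, eval_monomial]; ring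
  · rw [(Nat.not_odd_iff_even.1 h).neg_one_pow, one_pow, map_zero]; ring

lemma eval_cubeDeriv_update [DecidableEq σ] (P : MvPolynomial σ ℝ) (i : σ) (y : σ → ℝ) (c : ℝ) :
    eval (Function.update y i c) (cubeDeriv P i) = eval y (cubeDeriv P i) := by
  have h := eval_update_sub_eval_update P i (Function.update y i c)
  simp only [Function.update_idem] at h
  linarith [eval_update_sub_eval_update P i y]

end Derivative

section ThresholdFunctions

variable {n : ℕ}

def ptf (P : MvPolynomial (Fin n) ℝ) (x : Fin n → Bool) : Bool :=
  decide (0 ≤ eval (fun i => pmOne (x i)) P)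

lemma isPTF_iff {d : ℕ} {f : (Fin n → Bool) → Bool} :
    IsPTF d f ↔ ∃ P : MvPolynomial (Fin n) ℝ, P.totalDegree ≤ d ∧ f = ptf P := by
  refine exists_congr fun P => and_congr_right fun _ => ?_
  simp only [funext_iff, ptf]
  exact forall_congr' fun x => by generalize f x = b; cases b <;> simp

lemma pmOne_comp_flipCoord (i : Fin n) (x : Fin n → Bool) :
    (fun j => pmOne (flipCoord i x j))
      = Function.update (fun j => pmOne (x j)) i (-pmOne (x i)) := by
  ext j
  by_cases h : j = i
  · subst h; simp [flipCoord, pmOne_not]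
  · simp [flipCoord, Function.update_of_ne h]

lemma eval_sub_eval_flipCoord (P : MvPolynomial (Fin n) ℝ) (i : Fin n) (x : Fin n → Bool) :
    eval (fun j => pmOne (x j)) P - eval (fun j => pmOne (flipCoord i x j)) P
      = 2 * pmOne (x i) * eval (fun j => pmOne (x j)) (cubeDeriv P i) := by
  have key := eval_update_sub_eval_update P i fun j => pmOne (x j)
  rw [pmOne_comp_flipCoord]
  nth_rewrite 1 [← Function.update_eq_self i fun j => pmOne (x j)]
  cases x i <;> simp only [pmOne_true, pmOne_false, neg_neg] <;> linarith

lemma ptf_cubeDeriv_flipCoord (P : MvPolynomial (Fin n) ℝ) (i : Fin n) (x : Fin n → Bool) :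
    ptf (cubeDeriv P i) (flipCoord i x) = ptf (cubeDeriv P i) x := by
  rw [ptf, pmOne_comp_flipCoord, eval_cubeDeriv_update, ptf]

lemma pmOne_ptf_cubeDeriv {P : MvPolynomial (Fin n) ℝ} {i : Fin n} {x : Fin n → Bool}
    (h : ptf P x ≠ ptf P (flipCoord i x)) :
    pmOne (ptf (cubeDeriv P i) x) = pmOne (ptf P x) * pmOne (x i) := by
  have e := eval_sub_eval_flipCoord P i x
  simp only [ptf] at h ⊢
  set p := eval (fun j => pmOne (x j)) P
  set p' := eval (fun j => pmOne (flipCoord i x j)) P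
  set q := eval (fun j => pmOne (x j)) (cubeDeriv P i)
  cases hxi : x i <;> by_cases hp : 0 ≤ p <;> by_cases hp' : 0 ≤ p' <;> by_cases hq : 0 ≤ q <;>
    simp [hxi, hp, hp', hq] at h e ⊢ <;> linarith

end ThresholdFunctions

lemma le_two_mul_rpow_succ {x A : ℝ} (hx : 1 ≤ x) (d : ℕ)
    (h : A ^ 2 ≤ x + x * (2 * x ^ (1 - (1 / 2 : ℝ) ^ d))) :
    A ≤ 2 * x ^ (1 - (1 / 2 : ℝ) ^ (d + 1)) := by
  have hd : (1 / 2 : ℝ) ^ d ≤ 1 := pow_le_one₀ (by norm_num) (by norm_num)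
  have hexp : (1 - (1 / 2 : ℝ) ^ (d + 1)) * (2 : ℕ) = 1 + (1 - (1 / 2) ^ d) := by
    push_cast; ring
  have hsq : (2 * x ^ (1 - (1 / 2 : ℝ) ^ (d + 1))) ^ 2 = 4 * (x * x ^ (1 - (1 / 2 : ℝ) ^ d)) := by
    rw [mul_pow, ← Real.rpow_mul_natCast (by linarith), hexp,
      Real.rpow_one_add' (by linarith) (by linarith)]
    norm_num
  have hone : 1 ≤ x ^ (1 - (1 / 2 : ℝ) ^ d) := Real.one_le_rpow hx (by linarith)
  refine le_of_pow_le_pow_left₀ two_ne_zero (by positivity) ?_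
  rw [hsq]
  nlinarith

theorem avgSens_le_of_isPTF {n : ℕ} (hn : 1 ≤ n) (d : ℕ) (f : (Fin n → Bool) → Bool)
    (hf : IsPTF d f) :
    avgSens f ≤ 2 * (n : ℝ) ^ (1 - (1 / 2 : ℝ) ^ d) := by
  induction d generalizing f with
  | zero =>
    obtain ⟨P, hP, rfl⟩ := isPTF_iff.1 hf
    obtain ⟨c, rfl⟩ : ∃ c, P = C c := ⟨_, totalDegree_eq_zero_iff_eq_C.1 (by omega)⟩
    have hconst : ptf (C c : MvPolynomial (Fin n) ℝ) = fun _ => decide (0 ≤ c) :=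
      funext fun x => by simp [ptf]
    rw [hconst, avgSens_const]
    positivity
  | succ d ih =>
    obtain ⟨P, hP, rfl⟩ := isPTF_iff.1 hf
    have hderiv : ∀ j, avgSens (ptf (cubeDeriv P j)) ≤ 2 * (n : ℝ) ^ (1 - (1 / 2 : ℝ) ^ d) :=
      fun j => ih _ (isPTF_iff.2 ⟨_, (totalDegree_cubeDeriv_le P j).trans (by omega), rfl⟩)
    refine le_two_mul_rpow_succ (by exact_mod_cast hn) d ?_
    calc avgSens (ptf P) ^ 2 ≤ n + ∑ j, avgSens (ptf (cubeDeriv P j)) :=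
          avgSens_sq_le (ptf_cubeDeriv_flipCoord P) fun _ _ => pmOne_ptf_cubeDeriv
      _ ≤ n + n * (2 * (n : ℝ) ^ (1 - (1 / 2 : ℝ) ^ d)) := by
          gcongr
          simpa using sum_le_sum fun j (_ : j ∈ univ) => hderiv j

theorem combinatorial_average_sensitivity_general (n d : ℕ)
    (f : (Fin n → Bool) → Bool) (hf : IsPTF d f) :
    avgSens f ≤ 3 * (n : ℝ) ^ ((1 : ℝ) - (1 / 2 : ℝ) ^ d) := by
  rcases Nat.eq_zero_or_pos n with rfl | hn
  · simp only [avgSens, univ_eq_empty, sum_empty]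
    positivity
  · have h := avgSens_le_of_isPTF hn d f hf
    have : 0 ≤ (n : ℝ) ^ ((1 : ℝ) - (1 / 2 : ℝ) ^ d) := by positivity
    linarith

/-- Theorem 7.2: every degree-`d` PTF `f` on `{-1,1}^n` satisfies
`AS(f) ≤ 3 · n^{1 - 2^{-d}}`. -/
theorem combinatorial_average_sensitivity (n d : ℕ) (hn : 1 ≤ n) (hd : 1 ≤ d)
    (f : (Fin n → Bool) → Bool) (hf : IsPTF d f) :
    avgSens f ≤ 3 * (n : ℝ) ^ ((1 : ℝ) - (1 / 2 : ℝ) ^ d) :=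
  combinatorial_average_sensitivity_general n d f hf

end
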